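/- arXiv:2306.00788 — 7 statements merged into one kernel-verified Lean document; each statement's English description precedes it below -/
import Mathlib

section
/- Let C = (c_{k,i}) be a d×∞ real matrix with ∑_i c_{k,i}² < ∞ for all k, and let D_λ = diag(λ_1, λ_2, …) with λ_1 ≥ λ_2 ≥ ⋯ > 0 and λ_i → 0. If C D_λ C^T = I_d, then ‖C‖_F² = ∑_{k,i} c_{k,i}² ≥ ∑_{i=1}^d 1/λ_i, with equality when the rows of G := C √{D_λ} form an orthonormal set whose first j columns have total squared norm j for each j ≤ d. -/
/-!
With `G = C √D_λ` the hypothesis says that the rows of `G` are orthonormal in `ℓ²`, so Bessel's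
inequality applied to the unit vectors bounds the squared norm `s i` of every column of `G` by `1`,
while `∑ i, s i = d`. Since `λ` is nonincreasing, with `μ = λ (d - 1)` every term of
`‖C‖_F² - ∑_{i<d} λ i⁻¹ = ∑_{i<d} (s i - 1) / λ i + ∑_{i≥d} s i / λ i`
is at least the corresponding term of `∑_{i<d} (s i - 1) / μ + ∑_{i≥d} s i / μ = 0`.
Equality in the partial sums forces `s i = 1` for `i < d`, hence `s i = 0` for `i ≥ d`.
-/

open Finset

theorem sum_sq_le_one_of_orthonormal_rows {κ ι : Type*} [Fintype κ] [DecidableEq κ]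
    (G : κ → ι → ℝ) (hG : ∀ k l, HasSum (fun i => G k i * G l i) (if k = l then 1 else 0))
    (i : ι) : ∑ k, G k i ^ 2 ≤ 1 := by
  classical
  let v : κ → lp (fun _ : ι => ℝ) 2 := fun k =>
    ⟨G k, memℓp_gen (by simpa [sq] using (hG k k).summable)⟩
  have hv : Orthonormal ℝ v := by
    rw [orthonormal_iff_ite]
    intro k l
    refine (lp.hasSum_inner (v k) (v l)).unique ?_
    simpa [v, mul_comm] using hG k l
  simpa [v, lp.inner_single_right, lp.norm_single] using
    hv.sum_inner_products_le (s := univ) (x := lp.single 2 i (1 : ℝ))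

theorem sum_range_inv_le_tsum {lam t : ℕ → ℝ} {n : ℕ} (hmono : Antitone lam)
    (hpos : ∀ i, 0 < lam i) (ht : ∀ i, 0 ≤ t i) (hle : ∀ i, lam i * t i ≤ 1)
    (hsum : HasSum (fun i => lam i * t i) n) (ht_sum : Summable t) :
    ∑ i ∈ range n, (lam i)⁻¹ ≤ ∑' i, t i := by
  set μ := lam (n - 1)
  have hμ : 0 < μ := hpos _
  have head : ∀ i ∈ range n, (lam i * t i - 1) / μ ≤ t i - (lam i)⁻¹ := by
    intro i hi
    have hμi : μ ≤ lam i := hmono (by simp at hi; omega)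
    have key : t i - (lam i)⁻¹ = (lam i * t i - 1) / lam i := by field_simp [(hpos i).ne']
    rw [key, div_le_div_iff₀ hμ (hpos i)]
    exact mul_le_mul_of_nonpos_left hμi (sub_nonpos.2 (hle i))
  have tail : ∀ i, lam (i + n) * t (i + n) / μ ≤ t (i + n) := by
    intro i
    rw [div_le_iff₀ hμ, mul_comm]
    exact mul_le_mul_of_nonneg_left (hmono (by omega)) (ht _)
  have htail : HasSum (fun i => lam (i + n) * t (i + n)) (n - ∑ i ∈ range n, lam i * t i) :=
    (hasSum_nat_add_iff' n).2 hsum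
  calc ∑ i ∈ range n, (lam i)⁻¹
      = ∑ i ∈ range n, (lam i)⁻¹ + (∑ i ∈ range n, (lam i * t i - 1) / μ
          + ∑' i, lam (i + n) * t (i + n) / μ) := by
        rw [tsum_div_const, htail.tsum_eq, ← sum_div, sum_sub_distrib, sum_const, card_range,
          nsmul_one]
        ring
    _ ≤ ∑ i ∈ range n, (lam i)⁻¹ + (∑ i ∈ range n, (t i - (lam i)⁻¹) + ∑' i, t (i + n)) :=
        add_le_add_right (add_le_add (sum_le_sum head)
          ((htail.div_const μ).summable.tsum_le_tsum tail ((summable_nat_add_iff n).2 ht_sum))) _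
    _ = ∑' i, t i := by rw [← ht_sum.sum_add_tsum_nat_add n, sum_sub_distrib]; ring

theorem tsum_eq_sum_range_inv {lam t : ℕ → ℝ} {n : ℕ}
    (hpos : ∀ i, 0 < lam i) (ht : ∀ i, 0 ≤ t i) (hle : ∀ i, lam i * t i ≤ 1)
    (hsum : HasSum (fun i => lam i * t i) n) (ht_sum : Summable t)
    (hhead : ∑ i ∈ range n, lam i * t i = n) :
    ∑' i, t i = ∑ i ∈ range n, (lam i)⁻¹ := by
  have hone : ∀ i ∈ range n, lam i * t i = 1 := by
    refine (sum_eq_sum_iff_of_le fun i _ => hle i).1 ?_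
    simpa using hhead
  have hzero : ∀ i, t (i + n) = 0 := by
    have htail : HasSum (fun i => lam (i + n) * t (i + n)) 0 := by
      simpa [hhead] using (hasSum_nat_add_iff' n).2 hsum
    rw [hasSum_zero_iff_of_nonneg fun i => mul_nonneg (hpos _).le (ht _)] at htail
    intro i
    simpa [(hpos _).ne'] using congr_fun htail i
  rw [← ht_sum.sum_add_tsum_nat_add n, tsum_congr hzero, tsum_zero, add_zero]
  exact sum_congr rfl fun i hi => eq_inv_of_mul_eq_one_right (hone i hi)

theorem frobenius_lower_bound_of_whitening_general
    (d : ℕ) (lam : ℕ → ℝ) (C : Fin d → ℕ → ℝ)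
    (hmono : Antitone lam) (hpos : ∀ i, 0 < lam i)
    (hC2 : ∀ k : Fin d, Summable (fun i => C k i ^ 2))
    (hprod : ∀ k l : Fin d, Summable (fun i => C k i * lam i * C l i))
    (hwhite : ∀ k l : Fin d, (∑' i, C k i * lam i * C l i) = if k = l then 1 else 0) :
    (∑ i ∈ Finset.range d, (lam i)⁻¹) ≤ ∑ k : Fin d, ∑' i, C k i ^ 2 ∧
      ((∀ j ≤ d, (∑ i ∈ Finset.range j, ∑ k : Fin d, (C k i * Real.sqrt (lam i)) ^ 2) = j) →
        (∑ k : Fin d, ∑' i, C k i ^ 2) = ∑ i ∈ Finset.range d, (lam i)⁻¹) := by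
  set G : Fin d → ℕ → ℝ := fun k i => C k i * √(lam i)
  have hG_mul : ∀ k l i, G k i * G l i = C k i * lam i * C l i := fun k l i => by
    linear_combination C k i * C l i * Real.mul_self_sqrt (hpos i).le
  have hcol : ∀ i, ∑ k, G k i ^ 2 = lam i * ∑ k, C k i ^ 2 := fun i => by
    rw [mul_sum]
    exact sum_congr rfl fun k _ => by rw [sq, hG_mul]; ring
  have horth : ∀ k l, HasSum (fun i => G k i * G l i) (if k = l then 1 else 0) := fun k l => by
    simpa only [hG_mul, ← hwhite k l] using (hprod k l).hasSum
  have hsum : HasSum (fun i => lam i * ∑ k, C k i ^ 2) d := by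
    have hdiag := hasSum_sum (s := univ) fun k _ => horth k k
    simpa only [if_true, sum_const, card_univ, Fintype.card_fin, nsmul_eq_mul, mul_one, ← sq,
      hcol] using hdiag
  have hle : ∀ i, lam i * ∑ k, C k i ^ 2 ≤ 1 := fun i =>
    hcol i ▸ sum_sq_le_one_of_orthonormal_rows G horth i
  have ht : ∀ i, 0 ≤ ∑ k, C k i ^ 2 := fun i => sum_nonneg fun k _ => sq_nonneg _
  have ht_sum : Summable fun i => ∑ k, C k i ^ 2 := summable_sum fun k _ => hC2 k
  rw [← Summable.tsum_finsetSum fun k _ => hC2 k]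
  refine ⟨sum_range_inv_le_tsum hmono hpos ht hle hsum ht_sum,
    fun heq => tsum_eq_sum_range_inv hpos ht hle hsum ht_sum ?_⟩
  exact (sum_congr rfl fun i _ => hcol i).symm.trans (heq d le_rfl)

/-- If `C D_lam Cᵀ = I_d` with `lam` positive, nonincreasing, tending to 0,
then the Frobenius norm of `C` satisfies `‖C‖_F² ≥ ∑_{i<d} 1/lam i`, with equality when
the first `j` columns of `G = C √D_lam` have total squared norm `j` for each `j ≤ d`. -/
theorem frobenius_lower_bound_of_whitening
    (d : ℕ) (lam : ℕ → ℝ) (C : Fin d → ℕ → ℝ)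
    (hmono : Antitone lam) (hpos : ∀ i, 0 < lam i)
    (hlim : Filter.Tendsto lam Filter.atTop (nhds 0))
    (hC2 : ∀ k : Fin d, Summable (fun i => C k i ^ 2))
    (hprod : ∀ k l : Fin d, Summable (fun i => C k i * lam i * C l i))
    (hwhite : ∀ k l : Fin d, (∑' i, C k i * lam i * C l i) = if k = l then 1 else 0) :
    (∑ i ∈ Finset.range d, (lam i)⁻¹) ≤ ∑ k : Fin d, ∑' i, C k i ^ 2 ∧
      ((∀ j ≤ d, (∑ i ∈ Finset.range j, ∑ k : Fin d, (C k i * Real.sqrt (lam i)) ^ 2) = j) →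
        (∑ k : Fin d, ∑' i, C k i ^ 2) = ∑ i ∈ Finset.range d, (lam i)⁻¹) :=
  frobenius_lower_bound_of_whitening_general d lam C hmono hpos hC2 hprod hwhite
end

section
/- For block masking with flipping on {−1,1}^d (mask a uniformly random contiguous block of r coordinates, then flip each remaining coordinate independently with probability α/2, where r = ⌈(α/2)d⌉ in context but here take general r), one has ∑_a p(a|x)²/P_A(a) = 2^{d−r} (1 − α + α²/2)^{d−r} = (2 − 2α + α²)^{d−r} for every x; hence κ² ≤ (α² − 2α + 2)^{(1−α/2) d}. -/
open Finset

/-- Number of unmasked coordinates of `a` that disagree with `x` (flipped coordinates). -/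
def flipCount {d : ℕ} (x : Fin d → Bool) (a : Fin d → Option Bool) : ℕ :=
  (Finset.univ.filter (fun i => a i ≠ none ∧ a i ≠ some (x i))).card

/-- Conditional density `p(a|x)` of block masking with flipping: mask a uniformly random
contiguous block of `r` coordinates, then independently flip each remaining coordinate
with probability `α/2`. -/
noncomputable def pBlockFlip {d : ℕ} (r : ℕ) (α : ℝ) (x : Fin d → Bool)
    (a : Fin d → Option Bool) : ℝ :=
  (∑ i ∈ Finset.range (d - r + 1),
      if (∀ j : Fin d, a j = none ↔ (i ≤ (j : ℕ) ∧ (j : ℕ) < i + r)) then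
        (α / 2) ^ flipCount x a * (1 - α / 2) ^ (d - r - flipCount x a)
      else 0) / (d - r + 1)

/-- Marginal `P_A(a)` under the uniform distribution on `{−1,1}^d`. -/
noncomputable def pABlockFlip {d : ℕ} (r : ℕ) (α : ℝ) (a : Fin d → Option Bool) : ℝ :=
  (∑ x : Fin d → Bool, pBlockFlip r α x a) / 2 ^ d

/-!
Given the block position, `p(a|x)` factorises over the unmasked coordinates into weights
`α/2` (flipped) and `1 - α/2` (kept), whose sum over the input bit is `1`. Hence
`P_A(a) = c(a) 2^r / (2^d (d - r + 1))`, where `c(a)` counts the block positions consistent with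
the mask of `a`, and `p(a|x)² / P_A(a) = 2^(d-r) c(a) w(a)² / (d - r + 1)` with `w` the product of
weights. Summing `c(a) w(a)²` block by block, each block contributes
`((α/2)² + (1 - α/2)²)^(d-r)`, and `2 ((α/2)² + (1 - α/2)²) = 2 - 2α + α²`. The bound follows as
the base `(1 - α)² + 1` is at least `1` and `d - r ≤ (1 - α/2) d`.
-/

def flipWeight {R : Type*} [One R] (u v : R) (b : Bool) : Option Bool → R
  | none => 1
  | some c => if c = b then v else u

section FlipWeight

variable {R : Type*} [CommSemiring R] {d : ℕ} (u v : R)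

lemma flipWeight_sq (b : Bool) (o : Option Bool) :
    flipWeight u v b o ^ 2 = flipWeight (u ^ 2) (v ^ 2) b o := by
  rcases o with _ | c
  · exact one_pow 2
  · exact apply_ite (· ^ 2) _ _ _

lemma sum_flipWeight (o : Option Bool) :
    ∑ b, flipWeight u v b o = if o = none then 2 else u + v := by
  rcases o with _ | _ | _ <;> simp [flipWeight, add_comm, one_add_one_eq_two]

lemma flipWeight_eq_pow_mul_pow (b : Bool) (o : Option Bool) :
    flipWeight u v b o
      = u ^ (if o ≠ none ∧ o ≠ some b then 1 else 0) * v ^ (if o = some b then 1 else 0) := by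
  rcases o with _ | c
  · simp [flipWeight]
  · by_cases h : c = b <;> simp [flipWeight, h]

lemma pow_flipCount_mul_pow (x : Fin d → Bool) (a : Fin d → Option Bool) :
    u ^ flipCount x a * v ^ (#{j | a j ≠ none} - flipCount x a)
      = ∏ j, flipWeight u v (x j) (a j) := by
  have hkept : #{j | a j = some (x j)} + flipCount x a = #{j | a j ≠ none} := by
    rw [flipCount, ← card_filter_add_card_filter_not (s := {j | a j ≠ none})
      (fun j => a j = some (x j)), filter_filter, filter_filter]
    congr 2
    ext j
    simp +contextual
  simp only [flipWeight_eq_pow_mul_pow, prod_mul_distrib, prod_pow_eq_pow_sum, ← card_filter,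
    flipCount, ← hkept, Nat.add_sub_cancel]

lemma sum_prod_flipWeight_inputs (a : Fin d → Option Bool) :
    ∑ x : Fin d → Bool, ∏ j, flipWeight u v (x j) (a j)
      = 2 ^ #{j | a j = none} * (u + v) ^ #{j | ¬ a j = none} := by
  rw [← Fintype.prod_sum (fun j b => flipWeight u v b (a j))]
  simp only [sum_flipWeight, prod_ite, prod_const]

lemma sum_prod_flipWeight_masks (x : Fin d → Bool) (P : Fin d → Prop) [DecidablePred P] :
    ∑ a : Fin d → Option Bool,
        (if ∀ j, a j = none ↔ P j then ∏ j, flipWeight u v (x j) (a j) else 0)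
      = (u + v) ^ #{j | ¬ P j} := by
  have hfactor : ∀ a : Fin d → Option Bool,
      (if ∀ j, a j = none ↔ P j then ∏ j, flipWeight u v (x j) (a j) else 0)
        = ∏ j, if (a j = none ↔ P j) then flipWeight u v (x j) (a j) else 0 := by
    intro a
    simp [prod_ite_zero]
  have hcoord : ∀ j, ∑ o, (if (o = none ↔ P j) then flipWeight u v (x j) o else 0)
      = if P j then 1 else u + v := by
    intro j
    by_cases hP : P j
    · simp [hP, flipWeight]
    · cases x j <;> simp [hP, Fintype.sum_option, flipWeight, add_comm]
  rw [sum_congr rfl fun a _ => hfactor a,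
    ← Fintype.prod_sum fun j o => if (o = none ↔ P j) then flipWeight u v (x j) o else 0,
    prod_congr rfl fun j _ => hcoord j, prod_ite, prod_const_one, one_mul, prod_const]

end FlipWeight

section BlockMask

variable {d r : ℕ}

abbrev IsBlockMask (r i : ℕ) (a : Fin d → Option Bool) : Prop :=
  ∀ j : Fin d, a j = none ↔ (i ≤ (j : ℕ) ∧ (j : ℕ) < i + r)

lemma card_filter_mem_block {i : ℕ} (h : i + r ≤ d) :
    #{j : Fin d | i ≤ (j : ℕ) ∧ (j : ℕ) < i + r} = r := by
  rw [card_filter, Fin.sum_univ_eq_sum_range (fun n => if i ≤ n ∧ n < i + r then 1 else 0),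
    ← card_filter, show {n ∈ range d | i ≤ n ∧ n < i + r} = Ico i (i + r) by ext; simp; omega,
    Nat.card_Ico, Nat.add_sub_cancel_left]

lemma card_filter_not_mem_block {i : ℕ} (h : i + r ≤ d) :
    #{j : Fin d | ¬ (i ≤ (j : ℕ) ∧ (j : ℕ) < i + r)} = d - r := by
  rw [filter_not, card_sdiff_of_subset (filter_subset _ _), card_filter_mem_block h, card_univ,
    Fintype.card_fin]

namespace IsBlockMask

variable {i : ℕ} {a : Fin d → Option Bool}

lemma card_masked (hi : i + r ≤ d) (ha : IsBlockMask r i a) : #{j | a j = none} = r := by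
  simp only [ha, card_filter_mem_block hi]

lemma card_unmasked (hi : i + r ≤ d) (ha : IsBlockMask r i a) : #{j | a j ≠ none} = d - r := by
  simp only [ne_eq, ha, card_filter_not_mem_block hi]

lemma pow_flipCount_mul_pow {R : Type*} [CommSemiring R] (hi : i + r ≤ d)
    (ha : IsBlockMask r i a) (u v : R)
    (x : Fin d → Bool) :
    u ^ flipCount x a * v ^ (d - r - flipCount x a) = ∏ j, flipWeight u v (x j) (a j) := by
  rw [← ha.card_unmasked hi, _root_.pow_flipCount_mul_pow]

end IsBlockMask

-- Not a 0/1 indicator: for `r = 0` all `d + 1` positions are consistent with an unmasked `a`.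
def blockCount (d r : ℕ) (a : Fin d → Option Bool) : ℕ :=
  #{i ∈ range (d - r + 1) | IsBlockMask r i a}

lemma exists_isBlockMask_of_blockCount_ne_zero (hrd : r ≤ d) {a : Fin d → Option Bool}
    (h : blockCount d r a ≠ 0) : ∃ i, i + r ≤ d ∧ IsBlockMask r i a := by
  obtain ⟨i, hi⟩ := card_ne_zero.1 h
  obtain ⟨hi, ha⟩ := mem_filter.1 hi
  exact ⟨i, by have := mem_range.1 hi; omega, ha⟩

lemma sum_blockCount_mul (f : (Fin d → Option Bool) → ℝ) :
    ∑ a, blockCount d r a * f a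
      = ∑ i ∈ range (d - r + 1), ∑ a, if IsBlockMask r i a then f a else 0 := by
  simp_rw [blockCount, card_filter, Nat.cast_sum, sum_mul, Nat.cast_ite, ite_mul, Nat.cast_one,
    Nat.cast_zero, one_mul, zero_mul]
  exact sum_comm

end BlockMask

section BlockFlip

variable {d r : ℕ} (α : ℝ)

lemma cast_sub_add_one_ne_zero (hrd : r ≤ d) : (d : ℝ) - r + 1 ≠ 0 := by
  have : (r : ℝ) ≤ d := by exact_mod_cast hrd
  positivity

lemma pBlockFlip_eq (hrd : r ≤ d) (x : Fin d → Bool) (a : Fin d → Option Bool) :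
    pBlockFlip r α x a
      = blockCount d r a / (d - r + 1) * ∏ j, flipWeight (α / 2) (1 - α / 2) (x j) (a j) := by
  unfold pBlockFlip
  rw [← sum_filter, sum_congr rfl fun i hi => IsBlockMask.pow_flipCount_mul_pow
    (by have := mem_range.1 (mem_filter.1 hi).1; omega) (mem_filter.1 hi).2 _ _ x, sum_const,
    nsmul_eq_mul, mul_div_right_comm]
  rfl

lemma pABlockFlip_eq (hrd : r ≤ d) (a : Fin d → Option Bool) :
    pABlockFlip r α a = blockCount d r a * 2 ^ r / (2 ^ d * (d - r + 1)) := by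
  unfold pABlockFlip
  simp_rw [pBlockFlip_eq α hrd]
  rw [← mul_sum, sum_prod_flipWeight_inputs, add_sub_cancel, one_pow, mul_one]
  by_cases h0 : blockCount d r a = 0
  · simp [h0]
  · obtain ⟨i, hi, ha⟩ := exists_isBlockMask_of_blockCount_ne_zero hrd h0
    rw [ha.card_masked hi]
    field_simp

lemma sq_pBlockFlip_div_pABlockFlip (hrd : r ≤ d) (x : Fin d → Bool) (a : Fin d → Option Bool) :
    pBlockFlip r α x a ^ 2 / pABlockFlip r α a
      = 2 ^ (d - r) / (d - r + 1)
        * (blockCount d r a * ∏ j, flipWeight ((α / 2) ^ 2) ((1 - α / 2) ^ 2) (x j) (a j)) := by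
  rw [pBlockFlip_eq α hrd, pABlockFlip_eq α hrd]
  by_cases h0 : blockCount d r a = 0
  · simp [h0]
  have hd : (2 : ℝ) ^ d = 2 ^ (d - r) * 2 ^ r := by rw [← pow_add, Nat.sub_add_cancel hrd]
  have hn := cast_sub_add_one_ne_zero hrd
  simp_rw [← flipWeight_sq, prod_pow, hd]
  generalize ∏ j, flipWeight (α / 2) (1 - α / 2) (x j) (a j) = P
  field_simp

theorem sum_sq_pBlockFlip_div_pABlockFlip (hrd : r ≤ d) (x : Fin d → Bool) :
    ∑ a, pBlockFlip r α x a ^ 2 / pABlockFlip r α a = (2 - 2 * α + α ^ 2) ^ (d - r) := by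
  have hblock : ∀ i ∈ range (d - r + 1), ∑ a : Fin d → Option Bool,
      (if IsBlockMask r i a then ∏ j, flipWeight ((α / 2) ^ 2) ((1 - α / 2) ^ 2) (x j) (a j)
        else 0) = ((α / 2) ^ 2 + (1 - α / 2) ^ 2) ^ (d - r) := fun i hi => by
    rw [sum_prod_flipWeight_masks, card_filter_not_mem_block (by have := mem_range.1 hi; omega)]
  simp_rw [sq_pBlockFlip_div_pABlockFlip α hrd, ← mul_sum, sum_blockCount_mul]
  rw [sum_congr rfl hblock, sum_const, card_range, nsmul_eq_mul,
    show 2 - 2 * α + α ^ 2 = 2 * ((α / 2) ^ 2 + (1 - α / 2) ^ 2) by ring, mul_pow]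
  have hn := cast_sub_add_one_ne_zero hrd
  push_cast [Nat.cast_sub hrd]
  field_simp

end BlockFlip

theorem blockFlip_augmentation_complexity_general
    (d r : ℕ) (α : ℝ) (hrd : r ≤ d) :
    (∀ x : Fin d → Bool,
        (∑ a : Fin d → Option Bool, (pBlockFlip r α x a) ^ 2 / pABlockFlip r α a)
          = (2 - 2 * α + α ^ 2) ^ (d - r)) ∧
      (r = ⌈(α / 2) * d⌉₊ →
        ∀ x : Fin d → Bool,
          (∑ a : Fin d → Option Bool, (pBlockFlip r α x a) ^ 2 / pABlockFlip r α a)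
            ≤ (α ^ 2 - 2 * α + 2) ^ ((1 - α / 2) * d)) := by
  refine ⟨sum_sq_pBlockFlip_div_pABlockFlip α hrd, fun hr x => ?_⟩
  have hexp : ((d - r : ℕ) : ℝ) ≤ (1 - α / 2) * d := by
    have : α / 2 * d ≤ r := hr ▸ Nat.le_ceil _
    push_cast [Nat.cast_sub hrd]
    linarith
  rw [sum_sq_pBlockFlip_div_pABlockFlip α hrd, ← Real.rpow_natCast,
    show 2 - 2 * α + α ^ 2 = α ^ 2 - 2 * α + 2 by ring]
  exact Real.rpow_le_rpow_of_exponent_le (by nlinarith [sq_nonneg (1 - α)]) hexp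

/-- for block masking with flipping,
`∑_a p(a|x)²/P_A(a) = (2 − 2α + α²)^{d−r}` for every `x`; hence with
`r = ⌈(α/2) d⌉` the augmentation complexity satisfies
`κ² ≤ (α² − 2α + 2)^{(1−α/2) d}`. -/
theorem blockFlip_augmentation_complexity
    (d r : ℕ) (α : ℝ) (hd : 0 < d) (hα0 : 0 < α) (hα1 : α < 1) (hrd : r ≤ d) :
    (∀ x : Fin d → Bool,
        (∑ a : Fin d → Option Bool, (pBlockFlip r α x a) ^ 2 / pABlockFlip r α a)
          = (2 - 2 * α + α ^ 2) ^ (d - r)) ∧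
      (r = ⌈(α / 2) * d⌉₊ →
        ∀ x : Fin d → Bool,
          (∑ a : Fin d → Option Bool, (pBlockFlip r α x a) ^ 2 / pABlockFlip r α a)
            ≤ (α ^ 2 - 2 * α + 2) ^ ((1 - α / 2) * d)) :=
  blockFlip_augmentation_complexity_general d r α hrd
end

section
/- Let F_2 = { f₁ f₂ : f₁, f₂ ∈ H_Γ, ‖f₁‖_{H_Γ} ≤ 1, ‖f₂‖_{H_Γ} ≤ 1 } and suppose K_X(x,x) ≤ κ² almost surely. Then the Rademacher complexity of F_2 over N i.i.d. samples satisfies R_N(F_2) ≤ κ²/√N. -/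
/-! For fixed signs `σ`, the sum `∑ₖ σₖ ⟪u, Ψₖ⟫ ⟪v, Ψₖ⟫` is the inner product of `u ⊗ v` with
`M_σ = ∑ₖ σₖ • Ψₖ ⊗ Ψₖ` in the Hilbert tensor product `H ⊗ H` (whose norm is the Frobenius norm
of the paper), so its supremum over the unit balls is at most `‖M_σ‖`. Distinct signs are
orthogonal, hence the average of `‖M_σ‖²` over all sign vectors is `∑ₖ ‖Ψₖ‖⁴ ≤ N κ⁴`, and
Cauchy–Schwarz over the `2 ^ N` sign vectors bounds the average of `‖M_σ‖` by `√N κ²`. -/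

open MeasureTheory Finset
open scoped TensorProduct RealInnerProductSpace

section RademacherSigns

variable {ι E : Type*} [Fintype ι] [DecidableEq ι] [NormedAddCommGroup E] [InnerProductSpace ℝ E]

theorem sum_sign_mul_sign_self (k : ι) :
    ∑ σ : ι → Bool, (if σ k then (1 : ℝ) else -1) * (if σ k then 1 else -1) =
      2 ^ Fintype.card ι := by
  have hsq (b : Bool) : (if b then (1 : ℝ) else -1) * (if b then 1 else -1) = 1 := by
    cases b <;> norm_num
  simp [hsq]

theorem sum_sign_mul_sign_of_ne {k l : ι} (hkl : k ≠ l) :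
    ∑ σ : ι → Bool, (if σ k then (1 : ℝ) else -1) * (if σ l then 1 else -1) = 0 := by
  -- flipping the `k`-th sign is a bijection of the sign vectors that negates every summand
  have hflip : Function.Involutive fun σ : ι → Bool => Function.update σ k (!σ k) := fun σ => by
    ext j; by_cases hj : j = k <;> simp [hj]
  have hneg (σ : ι → Bool) :
      (if Function.update σ k (!σ k) k then (1 : ℝ) else -1) *
          (if Function.update σ k (!σ k) l then 1 else -1) =
        -((if σ k then (1 : ℝ) else -1) * (if σ l then 1 else -1)) := by
    rw [Function.update_self, Function.update_of_ne hkl.symm]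
    cases σ k <;> cases σ l <;> norm_num
  have := Fintype.sum_equiv (hflip.toPerm _)
    (fun σ => -((if σ k then (1 : ℝ) else -1) * (if σ l then 1 else -1)))
    (fun σ => (if σ k then (1 : ℝ) else -1) * (if σ l then 1 else -1)) fun σ => (hneg σ).symm
  rw [sum_neg_distrib] at this
  linarith

theorem sum_norm_sum_sign_smul_sq (m : ι → E) :
    ∑ σ : ι → Bool, ‖∑ k, (if σ k then (1 : ℝ) else -1) • m k‖ ^ 2 =
      2 ^ Fintype.card ι * ∑ k, ‖m k‖ ^ 2 := by
  have hsign (k l : ι) :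
      ∑ σ : ι → Bool, (if σ k then (1 : ℝ) else -1) * (if σ l then 1 else -1) =
        if k = l then 2 ^ Fintype.card ι else 0 := by
    split_ifs with hkl
    · exact hkl ▸ sum_sign_mul_sign_self k
    · exact sum_sign_mul_sign_of_ne hkl
  calc ∑ σ : ι → Bool, ‖∑ k, (if σ k then (1 : ℝ) else -1) • m k‖ ^ 2
      = ∑ k, ∑ l, (∑ σ : ι → Bool, (if σ k then (1 : ℝ) else -1) * (if σ l then 1 else -1)) *
          ⟪m k, m l⟫ := by
        simp only [← real_inner_self_eq_norm_sq, sum_inner, inner_sum, real_inner_smul_left,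
          real_inner_smul_right, sum_mul]
        rw [sum_comm]
        refine sum_congr rfl fun k _ => ?_
        rw [sum_comm]
        refine sum_congr rfl fun l _ => sum_congr rfl fun σ _ => ?_
        rw [real_inner_comm]
        ring
    _ = 2 ^ Fintype.card ι * ∑ k, ‖m k‖ ^ 2 := by
        simp only [hsign]
        simp only [ite_mul, zero_mul, sum_ite_eq, mem_univ, if_true,
          real_inner_self_eq_norm_sq, mul_sum]

theorem sum_norm_sum_sign_smul_le (m : ι → E) :
    ∑ σ : ι → Bool, ‖∑ k, (if σ k then (1 : ℝ) else -1) • m k‖ ≤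
      2 ^ Fintype.card ι * √(∑ k, ‖m k‖ ^ 2) := by
  have hcs := Real.sum_mul_le_sqrt_mul_sqrt univ (fun _ : ι → Bool => (1 : ℝ))
    fun σ => ‖∑ k, (if σ k then (1 : ℝ) else -1) • m k‖
  rw [sum_norm_sum_sign_smul_sq, Real.sqrt_mul (by positivity), ← mul_assoc] at hcs
  simpa [Real.mul_self_sqrt] using hcs

end RademacherSigns

section ProductClass

variable {H : Type*} [NormedAddCommGroup H] [InnerProductSpace ℝ H]

theorem sum_mul_inner_mul_inner_eq_inner_tmul {ι : Type*} [Fintype ι] (c : ι → ℝ) (φ : ι → H)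
    (u v : H) :
    ∑ k, c k * (⟪u, φ k⟫ * ⟪v, φ k⟫) = ⟪u ⊗ₜ[ℝ] v, ∑ k, c k • (φ k ⊗ₜ[ℝ] φ k)⟫ := by
  simp only [inner_sum, TensorProduct.smul_tmul', TensorProduct.inner_tmul,
    real_inner_smul_right, mul_assoc]

theorem abs_sum_mul_inner_mul_inner_le {ι : Type*} [Fintype ι] (c : ι → ℝ) (φ : ι → H)
    {u v : H} (hu : ‖u‖ ≤ 1) (hv : ‖v‖ ≤ 1) :
    |∑ k, c k * (⟪u, φ k⟫ * ⟪v, φ k⟫)| ≤ ‖∑ k, c k • (φ k ⊗ₜ[ℝ] φ k)‖ := by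
  rw [sum_mul_inner_mul_inner_eq_inner_tmul]
  calc _ ≤ ‖u ⊗ₜ[ℝ] v‖ * ‖∑ k, c k • (φ k ⊗ₜ[ℝ] φ k)‖ := abs_real_inner_le_norm _ _
    _ ≤ ‖∑ k, c k • (φ k ⊗ₜ[ℝ] φ k)‖ := by
      rw [TensorProduct.norm_tmul]
      exact mul_le_of_le_one_left (norm_nonneg _) (mul_le_one₀ hu (norm_nonneg v) hv)

noncomputable def productClassEmpiricalRademacher {N : ℕ} (φ : Fin N → H) : ℝ :=
  ((2 : ℝ) ^ N)⁻¹ * ∑ σ : Fin N → Bool,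
    sSup {t : ℝ | ∃ u v : H, ‖u‖ ≤ 1 ∧ ‖v‖ ≤ 1 ∧
      t = |(N : ℝ)⁻¹ * ∑ k, (if σ k then (1 : ℝ) else -1) * (⟪u, φ k⟫ * ⟪v, φ k⟫)|}

theorem productClassEmpiricalRademacher_nonneg {N : ℕ} (φ : Fin N → H) :
    0 ≤ productClassEmpiricalRademacher φ :=
  mul_nonneg (by positivity) <| sum_nonneg fun _ _ =>
    Real.sSup_nonneg <| by rintro _ ⟨u, v, -, -, rfl⟩; exact abs_nonneg _

theorem productClassEmpiricalRademacher_le {N : ℕ} (φ : Fin N → H) (κ : ℝ)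
    (hφ : ∀ k, ‖φ k‖ ≤ κ) :
    productClassEmpiricalRademacher φ ≤ κ ^ 2 / √N := by
  set M : (Fin N → Bool) → H ⊗[ℝ] H :=
    fun σ => ∑ k, (if σ k then (1 : ℝ) else -1) • (φ k ⊗ₜ[ℝ] φ k)
  have hsSup (σ : Fin N → Bool) :
      sSup {t : ℝ | ∃ u v : H, ‖u‖ ≤ 1 ∧ ‖v‖ ≤ 1 ∧
        t = |(N : ℝ)⁻¹ * ∑ k, (if σ k then (1 : ℝ) else -1) * (⟪u, φ k⟫ * ⟪v, φ k⟫)|} ≤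
        (N : ℝ)⁻¹ * ‖M σ‖ := by
    refine Real.sSup_le ?_ (by positivity)
    rintro _ ⟨u, v, hu, hv, rfl⟩
    rw [abs_mul, abs_inv, Nat.abs_cast]
    gcongr
    exact abs_sum_mul_inner_mul_inner_le _ φ hu hv
  have hsq (k : Fin N) : ‖φ k ⊗ₜ[ℝ] φ k‖ ^ 2 ≤ (κ ^ 2) ^ 2 := by
    rw [TensorProduct.norm_tmul, ← sq]
    gcongr
    exact hφ k
  calc productClassEmpiricalRademacher φ
      ≤ ((2 : ℝ) ^ N)⁻¹ * ∑ σ, (N : ℝ)⁻¹ * ‖M σ‖ := by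
        unfold productClassEmpiricalRademacher
        gcongr with σ
        exact hsSup σ
    _ = (N : ℝ)⁻¹ * (((2 : ℝ) ^ N)⁻¹ * ∑ σ, ‖M σ‖) := by rw [← mul_sum]; ring
    _ ≤ (N : ℝ)⁻¹ * √(∑ k, ‖φ k ⊗ₜ[ℝ] φ k‖ ^ 2) := by
        gcongr
        rw [inv_mul_le_iff₀ (by positivity)]
        simpa only [Fintype.card_fin] using sum_norm_sum_sign_smul_le fun k => φ k ⊗ₜ[ℝ] φ k
    _ ≤ (N : ℝ)⁻¹ * √(N * (κ ^ 2) ^ 2) := by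
        gcongr
        simpa using sum_le_sum fun k (_ : k ∈ univ) => hsq k
    _ = κ ^ 2 / √N := by
        rw [Real.sqrt_mul (Nat.cast_nonneg _), Real.sqrt_sq (sq_nonneg κ), ← mul_assoc,
          inv_mul_eq_div, Real.sqrt_div_self', one_div_mul_eq_div]

end ProductClass

theorem rademacher_complexity_product_class_le_general
    {X H : Type*} [MeasurableSpace X]
    [NormedAddCommGroup H] [InnerProductSpace ℝ H]
    (PX : Measure X) [IsProbabilityMeasure PX]
    (Ψ : X → H) (κ : ℝ) (N : ℕ)
    (hΨ : ∀ x, ‖Ψ x‖ ≤ κ) :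
    (∫ xs : Fin N → X,
        ((2 : ℝ) ^ N)⁻¹ *
          ∑ σ : Fin N → Bool,
            sSup {t : ℝ | ∃ u v : H, ‖u‖ ≤ 1 ∧ ‖v‖ ≤ 1 ∧
              t = |(N : ℝ)⁻¹ * ∑ k : Fin N,
                    (if σ k then (1 : ℝ) else -1) *
                      ((@inner ℝ _ _ u (Ψ (xs k))) * (@inner ℝ _ _ v (Ψ (xs k))))|}
        ∂(Measure.pi fun _ : Fin N => PX))
      ≤ κ ^ 2 / Real.sqrt N := by
  have hbound (xs : Fin N → X) :
      ‖productClassEmpiricalRademacher fun k => Ψ (xs k)‖ ≤ κ ^ 2 / √N := by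
    rw [Real.norm_of_nonneg (productClassEmpiricalRademacher_nonneg _)]
    exact productClassEmpiricalRademacher_le _ κ fun k => hΨ (xs k)
  have hint := norm_integral_le_of_norm_le_const
    (μ := Measure.pi fun _ : Fin N => PX) (ae_of_all _ hbound)
  rw [probReal_univ, mul_one] at hint
  exact (Real.le_norm_self _).trans hint

/-- the Rademacher complexity of the product class
`F₂ = { x ↦ ⟨u, Ψ x⟩⟨v, Ψ x⟩ : ‖u‖ ≤ 1, ‖v‖ ≤ 1 }` over `N` i.i.d. samples is at most
`κ²/√N`, where `Ψ` is the feature map of the RKHS `H_Γ` and `K_X(x,x) = ‖Ψ x‖² ≤ κ²`. -/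
theorem rademacher_complexity_product_class_le
    {X H : Type*} [MeasurableSpace X]
    [NormedAddCommGroup H] [InnerProductSpace ℝ H]
    (PX : Measure X) [IsProbabilityMeasure PX]
    (Ψ : X → H) (κ : ℝ) (N : ℕ) (hN : 0 < N)
    (hκ : 0 ≤ κ) (hΨ : ∀ x, ‖Ψ x‖ ≤ κ) :
    (∫ xs : Fin N → X,
        ((2 : ℝ) ^ N)⁻¹ *
          ∑ σ : Fin N → Bool,
            sSup {t : ℝ | ∃ u v : H, ‖u‖ ≤ 1 ∧ ‖v‖ ≤ 1 ∧
              t = |(N : ℝ)⁻¹ * ∑ k : Fin N,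
                    (if σ k then (1 : ℝ) else -1) *
                      ((@inner ℝ _ _ u (Ψ (xs k))) * (@inner ℝ _ _ v (Ψ (xs k))))|}
        ∂(Measure.pi fun _ : Fin N => PX))
      ≤ κ ^ 2 / Real.sqrt N :=
  rademacher_complexity_product_class_le_general PX Ψ κ N hΨ
end

section
/- Let g* = g₀ + β g₁ with g₀ ⟂ g₁, ‖g₁‖ = 1, ‖g₀‖² = α², and suppose: (a) ‖Γ* g₀‖² ≤ α², (b) ‖Γ* g₁‖² ≤ τ² with τ < 1, (c) α² + β² ≤ B²/(1−ε), and (d) the isometry lower bound (1−ε)(α²+β²) ≤ ‖Γ*(g₀+βg₁)‖². Then β² τ² ≤ (τ²/(1−τ²)) · ((τ+ε)/(1−ε)) · B². -/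
/-! The triangle inequality gives `‖T(g₀ + β g₁)‖ ≤ α + |β| τ`, and `2α|β| ≤ α² + β²` turns
the isometry lower bound into `(1 - τ²) β² ≤ (ε + τ)(α² + β²) ≤ (ε + τ) B² / (1 - ε)`;
multiplying by `τ² / (1 - τ²)` gives the bound. -/

theorem norm_add_smul_le_of_le {E : Type*} [SeminormedAddCommGroup E] [NormedSpace ℝ E]
    {x y : E} {a t : ℝ} (β : ℝ) (hx : ‖x‖ ≤ a) (hy : ‖y‖ ≤ t) :
    ‖x + β • y‖ ≤ a + |β| * t :=
  calc ‖x + β • y‖ ≤ ‖x‖ + |β| * ‖y‖ := by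
        simpa only [norm_smul, Real.norm_eq_abs] using norm_add_le x (β • y)
    _ ≤ a + |β| * t := by gcongr

theorem one_sub_sq_mul_sq_le_of_le_add_sq {α β τ ε : ℝ} (hτ : 0 ≤ τ)
    (h : (1 - ε) * (α ^ 2 + β ^ 2) ≤ (α + |β| * τ) ^ 2) :
    (1 - τ ^ 2) * β ^ 2 ≤ (ε + τ) * (α ^ 2 + β ^ 2) := by
  have hamgm : 2 * α * |β| ≤ α ^ 2 + β ^ 2 := by
    nlinarith [sq_nonneg (α - |β|), sq_abs β]
  nlinarith [mul_le_mul_of_nonneg_left hamgm hτ, sq_abs β]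

theorem approximation_error_core_general
    {H₂ H₁ : Type*}
    [NormedAddCommGroup H₂] [InnerProductSpace ℝ H₂]
    [NormedAddCommGroup H₁] [InnerProductSpace ℝ H₁]
    (T : H₂ →ₗ[ℝ] H₁) (g₀ g₁ : H₂) (β τ ε B : ℝ)
    (hτ0 : 0 ≤ τ) (hτ1 : τ < 1)
    (hε : 0 < ε ∧ ε < 1)
    (ha : ‖T g₀‖ ^ 2 ≤ ‖g₀‖ ^ 2)
    (hb : ‖T g₁‖ ^ 2 ≤ τ ^ 2)
    (hc : ‖g₀‖ ^ 2 + β ^ 2 ≤ B ^ 2 / (1 - ε))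
    (hd : (1 - ε) * (‖g₀‖ ^ 2 + β ^ 2) ≤ ‖T (g₀ + β • g₁)‖ ^ 2) :
    β ^ 2 * τ ^ 2 ≤ (τ ^ 2 / (1 - τ ^ 2)) * ((τ + ε) / (1 - ε)) * B ^ 2 := by
  have hTg₀ : ‖T g₀‖ ≤ ‖g₀‖ :=
    (pow_le_pow_iff_left₀ (norm_nonneg _) (norm_nonneg _) two_ne_zero).1 ha
  have hTg₁ : ‖T g₁‖ ≤ τ :=
    (pow_le_pow_iff_left₀ (norm_nonneg _) hτ0 two_ne_zero).1 hb
  have hupper : ‖T (g₀ + β • g₁)‖ ≤ ‖g₀‖ + |β| * τ := by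
    rw [map_add, map_smul]
    exact norm_add_smul_le_of_le β hTg₀ hTg₁
  have hkey : (1 - τ ^ 2) * β ^ 2 ≤ (ε + τ) * (‖g₀‖ ^ 2 + β ^ 2) :=
    one_sub_sq_mul_sq_le_of_le_add_sq hτ0 (hd.trans (pow_le_pow_left₀ (norm_nonneg _) hupper 2))
  have hτsq : 0 < 1 - τ ^ 2 := by nlinarith
  have hετ : 0 ≤ ε + τ := by linarith [hε.1]
  calc β ^ 2 * τ ^ 2 = τ ^ 2 / (1 - τ ^ 2) * ((1 - τ ^ 2) * β ^ 2) := by field_simp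
    _ ≤ τ ^ 2 / (1 - τ ^ 2) * ((ε + τ) * (‖g₀‖ ^ 2 + β ^ 2)) := by gcongr
    _ ≤ τ ^ 2 / (1 - τ ^ 2) * ((ε + τ) * (B ^ 2 / (1 - ε))) := by gcongr
    _ = (τ ^ 2 / (1 - τ ^ 2)) * ((τ + ε) / (1 - ε)) * B ^ 2 := by ring

/-- the algebraic core of the approximation-error bound (Lemma 3.3).
With `g* = g₀ + β g₁`, `g₀ ⟂ g₁`, `‖g₁‖ = 1`, `α = ‖g₀‖`, a linear map `T = Γ*` with
`‖T g₀‖² ≤ α²`, `‖T g₁‖² ≤ τ²` (`τ < 1`), `α² + β² ≤ B²/(1−ε)` and the isometry lower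
bound `(1−ε)(α²+β²) ≤ ‖T(g₀+βg₁)‖²`, one gets
`β² τ² ≤ (τ²/(1−τ²)) ((τ+ε)/(1−ε)) B²`. -/
theorem approximation_error_core
    {H₂ H₁ : Type*}
    [NormedAddCommGroup H₂] [InnerProductSpace ℝ H₂]
    [NormedAddCommGroup H₁] [InnerProductSpace ℝ H₁]
    (T : H₂ →ₗ[ℝ] H₁) (g₀ g₁ : H₂) (β τ ε B : ℝ)
    (horth : @inner ℝ _ _ g₀ g₁ = 0) (hg₁ : ‖g₁‖ = 1)
    (hβ : 0 ≤ β) (hτ0 : 0 ≤ τ) (hτ1 : τ < 1)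
    (hε : 0 < ε ∧ ε < 1) (hB : 0 < B)
    (ha : ‖T g₀‖ ^ 2 ≤ ‖g₀‖ ^ 2)
    (hb : ‖T g₁‖ ^ 2 ≤ τ ^ 2)
    (hc : ‖g₀‖ ^ 2 + β ^ 2 ≤ B ^ 2 / (1 - ε))
    (hd : (1 - ε) * (‖g₀‖ ^ 2 + β ^ 2) ≤ ‖T (g₀ + β • g₁)‖ ^ 2) :
    β ^ 2 * τ ^ 2 ≤ (τ ^ 2 / (1 - τ ^ 2)) * ((τ + ε) / (1 - ε)) * B ^ 2 :=
  approximation_error_core_general T g₀ g₁ β τ ε B hτ0 hτ1 hε ha hb hc hd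
end

section
/- Let ψ₁ ≡ 1 be the top eigenfunction of Γ*Γ with eigenvalue λ₁ = 1, and suppose Ψ̂ is any d-dimensional encoder. If the top-(d+1) eigenvalues satisfy λ_{d+1}/(1−λ_{d+1}) · ε/(1−ε) ≤ 1/2, then the worst-case approximation error over F_B(Γ;ε) satisfies sup_{f ∈ F_B(Γ;ε)} min_{w ∈ ℝ^d} ‖w^T Ψ̂ − f‖²_{P_X} ≥ (λ_{d+1}/(1−λ_{d+1})) · (ε/(1−ε)) · B², and equality holds when Ψ̂ spans the top-d eigenspace span{ψ₁,…,ψ_d}. -/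
/-!
Write `κ = (1-ε-λ_d)/λ_d` for the constraint weight at index `d`; then
`t := λ_d/(1-λ_d) · ε/(1-ε) = ε/(κ+ε)`, and `t ≤ 1/2` means `ε ≤ κ`.

Lower bound: `span {ψ_0, …, ψ_d}` has dimension `d+1`, so it contains a unit vector `v`
orthogonal to every `Ψ̂_j`, and the approximation error of any `f` is at least `⟪f, v⟫²`.
Let `ρ` be the normalised part of `v` orthogonal to `ψ_0`. The function
`f = B (±√(1-t) ψ_0 + √t ρ)` satisfies the constraint, since its weighted energy is at most
`-ε(1-t)B² + κ t B² = 0`, and `⟪f, v⟫² ≥ t B²` because `√t ≤ √(1-t)`.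

Upper bound: if `Ψ̂` spans `ψ_0, …, ψ_{d-1}`, the error of `g` is at most its tail mass
`S = ∑_{i ≥ d} ⟪g, ψ_i⟫²`. The weights are at least `-ε` everywhere and at least `κ` from `d`
on, so the constraint gives `0 ≥ -ε B² + (κ+ε) S`, that is `S ≤ t B²`.
-/

open scoped RealInnerProductSpace

section

variable {H : Type*} [NormedAddCommGroup H] [InnerProductSpace ℝ H] {ι : Type*}

section ApproxError

variable {d : ℕ} (Ψ : Fin d → H)

noncomputable def approxError (f : H) : ℝ :=
  sInf {t : ℝ | ∃ w : Fin d → ℝ, t = ‖(∑ i, w i • Ψ i) - f‖ ^ 2}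

noncomputable def worstCaseError (F : Set H) : ℝ :=
  sSup {e : ℝ | ∃ f ∈ F, e = approxError Ψ f}

variable {Ψ}

theorem approxError_le_of_mem_span {f g : H} (hg : g ∈ Submodule.span ℝ (Set.range Ψ)) :
    approxError Ψ f ≤ ‖g - f‖ ^ 2 := by
  obtain ⟨w, rfl⟩ := (Submodule.mem_span_range_iff_exists_fun ℝ).mp hg
  exact csInf_le ⟨0, by rintro _ ⟨w, rfl⟩; positivity⟩ ⟨w, rfl⟩

theorem approxError_le_norm_sq (f : H) : approxError Ψ f ≤ ‖f‖ ^ 2 := by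
  simpa using approxError_le_of_mem_span (Ψ := Ψ) (f := f) (Submodule.zero_mem _)

theorem inner_sq_le_approxError {v : H} (hv : ‖v‖ = 1) (hΨv : ∀ j, ⟪Ψ j, v⟫ = 0) (f : H) :
    ⟪f, v⟫ ^ 2 ≤ approxError Ψ f := by
  refine le_csInf ⟨_, 0, rfl⟩ ?_
  rintro _ ⟨w, rfl⟩
  have hxv : ⟪(∑ i, w i • Ψ i) - f, v⟫ = -⟪f, v⟫ := by
    simp [inner_sub_left, sum_inner, real_inner_smul_left, hΨv]
  have := abs_real_inner_le_norm ((∑ i, w i • Ψ i) - f) v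
  rw [hxv, abs_neg, hv, mul_one] at this
  simpa only [sq_abs] using pow_le_pow_left₀ (abs_nonneg _) this 2

theorem approxError_le_worstCaseError {F : Set H} {C : ℝ} (hC : ∀ f ∈ F, approxError Ψ f ≤ C)
    {f : H} (hf : f ∈ F) : approxError Ψ f ≤ worstCaseError Ψ F :=
  le_csSup ⟨C, by rintro _ ⟨g, hg, rfl⟩; exact hC g hg⟩ ⟨f, hf, rfl⟩

theorem worstCaseError_le {F : Set H} {C : ℝ} (hF : F.Nonempty)
    (hC : ∀ f ∈ F, approxError Ψ f ≤ C) : worstCaseError Ψ F ≤ C := by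
  obtain ⟨f, hf⟩ := hF
  exact csSup_le ⟨_, f, hf, rfl⟩ (by rintro _ ⟨g, hg, rfl⟩; exact hC g hg)

end ApproxError

section Coefficients

variable {ψ : ι → H} (hON : Orthonormal ℝ ψ)
include hON

theorem Orthonormal.inner_sum_smul_left_eq_ite [DecidableEq ι] (c : ι → ℝ) (s : Finset ι) (j : ι) :
    ⟪∑ i ∈ s, c i • ψ i, ψ j⟫ = if j ∈ s then c j else 0 := by
  simp [sum_inner, real_inner_smul_left, orthonormal_iff_ite.mp hON]

theorem Orthonormal.inner_eq_zero_of_mem_span_image {s : Set ι} {f : H}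
    (hf : f ∈ Submodule.span ℝ (ψ '' s)) {j : ι} (hj : j ∉ s) : ⟪f, ψ j⟫ = 0 := by
  have hle : Submodule.span ℝ (ψ '' s) ≤ (ℝ ∙ ψ j)ᗮ := by
    rw [Submodule.span_le]
    rintro _ ⟨i, hi, rfl⟩
    exact (Submodule.mem_orthogonal_singleton_iff_inner_right).mpr
      (hON.inner_eq_zero (ne_of_mem_of_not_mem hi hj).symm)
  rw [real_inner_comm]
  exact (Submodule.mem_orthogonal_singleton_iff_inner_right).mp (hle hf)

theorem Orthonormal.tsum_inner_sq_le (f : H) : ∑' i, ⟪f, ψ i⟫ ^ 2 ≤ ‖f‖ ^ 2 := by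
  simpa [real_inner_comm] using hON.tsum_inner_products_le (x := f)

theorem Orthonormal.hasSum_inner_sq [CompleteSpace H]
    (hbasis : (Submodule.span ℝ (Set.range ψ)).topologicalClosure = ⊤) (f : H) :
    HasSum (fun i => ⟪f, ψ i⟫ ^ 2) (‖f‖ ^ 2) := by
  have h := (HilbertBasis.mk hON hbasis.ge).hasSum_inner_mul_inner f f
  simp only [HilbertBasis.coe_mk, real_inner_self_eq_norm_sq] at h
  simpa [real_inner_comm, sq] using h

theorem Orthonormal.norm_sq_sum_sub_eq_tsum [CompleteSpace H]
    (hbasis : (Submodule.span ℝ (Set.range ψ)).topologicalClosure = ⊤) (s : Finset ι) (f : H) :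
    ‖(∑ i ∈ s, ⟪f, ψ i⟫ • ψ i) - f‖ ^ 2 =
      ∑' i, (↑s : Set ι)ᶜ.indicator (fun i => ⟪f, ψ i⟫ ^ 2) i := by
  classical
  rw [← (hON.hasSum_inner_sq hbasis _).tsum_eq]
  congr 1 with j
  by_cases hj : j ∈ s <;> simp [inner_sub_left, hON.inner_sum_smul_left_eq_ite, hj]

end Coefficients

theorem mul_tsum_indicator_compl_le {x q : ι → ℝ} {s : Set ι} {ε κ C : ℝ} (hx0 : ∀ i, 0 ≤ x i)
    (hx : Summable x) (hqx : Summable fun i => q i * x i) (hhead : ∀ i ∈ s, -ε ≤ q i)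
    (htail : ∀ i ∉ s, κ ≤ q i) (hε : 0 ≤ ε) (hxC : ∑' i, x i ≤ C)
    (hqx0 : ∑' i, q i * x i ≤ 0) : (κ + ε) * ∑' i, sᶜ.indicator x i ≤ ε * C := by
  have hpoint : ∀ i, -ε * x i + (κ + ε) * sᶜ.indicator x i ≤ q i * x i := by
    intro i
    by_cases hi : i ∈ s
    · simpa [hi] using mul_le_mul_of_nonneg_right (hhead i hi) (hx0 i)
    · have := mul_le_mul_of_nonneg_right (htail i hi) (hx0 i)
      simp only [Set.indicator_of_mem (Set.mem_compl hi)]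
      linarith
  have hsum := ((hx.mul_left (-ε)).add ((hx.indicator sᶜ).mul_left (κ + ε))).tsum_le_tsum hpoint hqx
  rw [Summable.tsum_add (hx.mul_left _) ((hx.indicator _).mul_left _), tsum_mul_left,
    tsum_mul_left] at hsum
  nlinarith

theorem tsum_mul_sq_le_of_forall_gt_eq_zero {q u : ℕ → ℝ} (hq : Monotone q) {d : ℕ}
    (hu : ∀ i, d < i → u i = 0) :
    ∑' i, q i * u i ^ 2 ≤ q 0 * u 0 ^ 2 + q d * (∑' i, u i ^ 2 - u 0 ^ 2) := by
  have hvanish : ∀ i ∉ Finset.range (d + 1), u i = 0 := fun i hi =>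
    hu i (by simpa [Nat.lt_succ_iff] using hi)
  rw [tsum_eq_sum (s := Finset.range (d + 1)) (by simp +contextual [hvanish]),
    tsum_eq_sum (s := Finset.range (d + 1)) (by simp +contextual [hvanish]),
    Finset.sum_range_succ', Finset.sum_range_succ', add_sub_cancel_right, Finset.mul_sum,
    add_comm]
  gcongr with i hi
  exact hq (Finset.mem_range.mp hi)

theorem exists_mem_norm_eq_one_forall_inner_eq_zero {W : Submodule ℝ H} [FiniteDimensional ℝ W]
    {d : ℕ} (hW : d < Module.finrank ℝ W) (Ψ : Fin d → H) :
    ∃ v ∈ W, ‖v‖ = 1 ∧ ∀ j, ⟪Ψ j, v⟫ = 0 := by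
  let L : W →ₗ[ℝ] Fin d → ℝ := LinearMap.pi fun j => (innerₛₗ ℝ (Ψ j)).comp W.subtype
  obtain ⟨w, hw, hw0⟩ := Submodule.exists_mem_ne_zero_of_ne_bot
    (LinearMap.ker_ne_bot_of_finrank_lt (f := L) (by simpa using hW))
  have hw0' : (w : H) ≠ 0 := by simpa using hw0
  refine ⟨‖(w : H)‖⁻¹ • (w : H), W.smul_mem _ w.2, norm_smul_inv_norm hw0', fun j => ?_⟩
  have := congrFun (LinearMap.mem_ker.mp hw) j
  simp only [L, LinearMap.pi_apply, LinearMap.comp_apply, Submodule.subtype_apply,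
    innerₛₗ_apply_apply, Pi.zero_apply] at this
  rw [real_inner_smul_right, this, mul_zero]

theorem inner_sub_inner_smul_eq_zero {e : H} (he : ‖e‖ = 1) (v : H) :
    ⟪e, v - ⟪e, v⟫ • e⟫ = 0 := by
  simp [inner_sub_right, real_inner_smul_right, he]

theorem inner_sq_add_norm_sub_inner_smul_sq {e : H} (he : ‖e‖ = 1) (v : H) :
    ⟪e, v⟫ ^ 2 + ‖v - ⟪e, v⟫ • e‖ ^ 2 = ‖v‖ ^ 2 := by
  have h := norm_add_sq_eq_norm_sq_add_norm_sq_real (x := ⟪e, v⟫ • e) (y := v - ⟪e, v⟫ • e)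
    (by rw [real_inner_smul_left, inner_sub_inner_smul_eq_zero he, mul_zero])
  rw [add_sub_cancel, norm_smul, he, mul_one, Real.norm_eq_abs] at h
  rw [← sq_abs ⟪e, v⟫]
  linear_combination -h

theorem exists_mem_orthogonal_inner_sq_add_inner_sq_eq {W : Submodule ℝ H} {e v : H}
    (heW : e ∈ W) (hvW : v ∈ W) (he : ‖e‖ = 1) :
    ∃ ρ ∈ W, ‖ρ‖ ≤ 1 ∧ ⟪e, ρ⟫ = 0 ∧ 0 ≤ ⟪ρ, v⟫ ∧ ⟪e, v⟫ ^ 2 + ⟪ρ, v⟫ ^ 2 = ‖v‖ ^ 2 := by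
  set r := v - ⟪e, v⟫ • e
  -- For `r = 0` the vector `‖r‖⁻¹ • r` is `0` (as `0⁻¹ = 0`), which still satisfies every claim.
  have heρ : ⟪e, ‖r‖⁻¹ • r⟫ = 0 := by
    rw [real_inner_smul_right, inner_sub_inner_smul_eq_zero he, mul_zero]
  have hρv : ⟪‖r‖⁻¹ • r, v⟫ = ‖r‖ := by
    have hv : v = r + ⟪e, v⟫ • e := (sub_add_cancel v _).symm
    rw [hv, inner_add_right, real_inner_smul_right, real_inner_comm e, heρ, mul_zero,
      add_zero, real_inner_smul_left, real_inner_self_eq_norm_sq]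
    rcases eq_or_ne ‖r‖ 0 with h | h
    · simp [h]
    · field_simp
  refine ⟨‖r‖⁻¹ • r, W.smul_mem _ (W.sub_mem hvW (W.smul_mem _ heW)), ?_, heρ, ?_, ?_⟩
  · rcases eq_or_ne r 0 with h | h
    · simp [h]
    · exact (norm_smul_inv_norm h).le
  · exact hρv.symm ▸ norm_nonneg r
  · rw [hρv, inner_sq_add_norm_sub_inner_smul_sq he]

theorem exists_mem_inner_sq_ge {W : Submodule ℝ H} {e v : H} (heW : e ∈ W) (hvW : v ∈ W)
    (he : ‖e‖ = 1) (hv : ‖v‖ = 1) {t : ℝ} (ht0 : 0 ≤ t) (ht : t ≤ 1 - t) (B : ℝ) :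
    ∃ f ∈ W, ⟪f, e⟫ ^ 2 = (1 - t) * B ^ 2 ∧ ‖f‖ ^ 2 ≤ B ^ 2 ∧ t * B ^ 2 ≤ ⟪f, v⟫ ^ 2 := by
  obtain ⟨ρ, hρW, hρ, heρ, hb, hab⟩ := exists_mem_orthogonal_inner_sq_add_inner_sq_eq heW hvW he
  set a := ⟪e, v⟫
  set b := ⟪ρ, v⟫
  obtain ⟨σ, hσ, hσa⟩ : ∃ σ : ℝ, σ ^ 2 = 1 ∧ σ * a = |a| := by
    rcases abs_choice a with h | h
    · exact ⟨1, by norm_num, by rw [h, one_mul]⟩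
    · exact ⟨-1, by norm_num, by rw [h, neg_one_mul]⟩
  set x := B * √(1 - t) * σ
  set y := B * √t
  have hx : x ^ 2 = (1 - t) * B ^ 2 := by
    rw [mul_pow, mul_pow, hσ, Real.sq_sqrt (by linarith)]
    ring
  refine ⟨x • e + y • ρ, W.add_mem (W.smul_mem _ heW) (W.smul_mem _ hρW), ?_, ?_, ?_⟩
  · rw [inner_add_left, real_inner_smul_left, real_inner_smul_left, real_inner_self_eq_norm_sq,
      he, real_inner_comm, heρ, one_pow, mul_one, mul_zero, add_zero, hx]
  · have horth : ⟪x • e, y • ρ⟫ = 0 := by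
      rw [real_inner_smul_left, real_inner_smul_right, heρ, mul_zero, mul_zero]
    rw [norm_add_sq_real, horth, norm_smul, norm_smul, he, Real.norm_eq_abs, Real.norm_eq_abs,
      mul_pow, mul_pow, sq_abs, sq_abs]
    have hy : y ^ 2 = t * B ^ 2 := by rw [mul_pow, Real.sq_sqrt ht0]; ring
    nlinarith [pow_le_one₀ (n := 2) (norm_nonneg ρ) hρ, sq_nonneg B]
  · rw [hv, one_pow] at hab
    have hfv : ⟪x • e + y • ρ, v⟫ = B * (√(1 - t) * |a| + √t * b) := by
      rw [inner_add_left, real_inner_smul_left, real_inner_smul_left, ← hσa]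
      ring
    have hsum : 1 ≤ |a| + b := by nlinarith [abs_nonneg a, sq_abs a]
    have hlow : √t ≤ √(1 - t) * |a| + √t * b := by
      nlinarith [Real.sqrt_le_sqrt ht, Real.sqrt_nonneg t, abs_nonneg a]
    calc t * B ^ 2 = B ^ 2 * √t ^ 2 := by rw [Real.sq_sqrt ht0, mul_comm]
      _ ≤ B ^ 2 * (√(1 - t) * |a| + √t * b) ^ 2 := by gcongr
      _ = ⟪x • e + y • ρ, v⟫ ^ 2 := by rw [hfv, mul_pow]

/-- `F_B(Γ;ε)` for the weights `q i = (1-ε-λ_i)/λ_i`. The summability conjunct keeps the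
weighted `tsum` from taking its junk value `0`. -/
noncomputable def spectralBall (ψ : ι → H) (q : ι → ℝ) (B : ℝ) : Set H :=
  {f | Summable (fun i => q i * ⟪f, ψ i⟫ ^ 2) ∧ ∑' i, ⟪f, ψ i⟫ ^ 2 ≤ B ^ 2 ∧
    ∑' i, q i * ⟪f, ψ i⟫ ^ 2 ≤ 0}

section SpectralBall

variable {ψ : ι → H} {q : ι → ℝ} {B : ℝ}

theorem zero_mem_spectralBall : (0 : H) ∈ spectralBall ψ q B := by
  simp [spectralBall, sq_nonneg]

theorem approxError_le_of_mem_spectralBall [CompleteSpace H] (hON : Orthonormal ℝ ψ)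
    (hbasis : (Submodule.span ℝ (Set.range ψ)).topologicalClosure = ⊤) {d : ℕ} (Ψ : Fin d → H)
    {f : H} (hf : f ∈ spectralBall ψ q B) : approxError Ψ f ≤ B ^ 2 :=
  (approxError_le_norm_sq f).trans ((hON.hasSum_inner_sq hbasis f).tsum_eq ▸ hf.2.1)

theorem mem_spectralBall_of_forall_gt_eq_zero {ψ : ℕ → H} (hON : Orthonormal ℝ ψ) {q : ℕ → ℝ}
    (hq : Monotone q) {d : ℕ} {ε t : ℝ} (hq0 : q 0 = -ε) (hqd : 0 ≤ q d)
    (ht : q d * t = ε * (1 - t)) {f : H} (hf : ∀ i, d < i → ⟪f, ψ i⟫ = 0)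
    (hf0 : ⟪f, ψ 0⟫ ^ 2 = (1 - t) * B ^ 2) (hfB : ‖f‖ ^ 2 ≤ B ^ 2) :
    f ∈ spectralBall ψ q B := by
  have hnorm : ∑' i, ⟪f, ψ i⟫ ^ 2 ≤ B ^ 2 := (hON.tsum_inner_sq_le f).trans hfB
  refine ⟨summable_of_ne_finset_zero (s := Finset.range (d + 1)) fun i hi => ?_, hnorm, ?_⟩
  · rw [hf i (by simpa [Nat.lt_succ_iff] using hi)]
    ring
  · have h := tsum_mul_sq_le_of_forall_gt_eq_zero hq hf
    rw [hq0, hf0] at h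
    nlinarith [mul_le_mul_of_nonneg_left hnorm hqd]

end SpectralBall

section WorstCaseError

variable [CompleteSpace H] {ψ : ℕ → H} (hON : Orthonormal ℝ ψ)
  (hbasis : (Submodule.span ℝ (Set.range ψ)).topologicalClosure = ⊤)
  {q : ℕ → ℝ} (hq : Monotone q) {ε : ℝ} (hq0 : q 0 = -ε) (B : ℝ)
  {d : ℕ} (Ψ : Fin d → H)
include hON hbasis hq hq0

theorem le_worstCaseError_spectralBall (hε : 0 < ε) (hεq : ε ≤ q d) :
    ε / (q d + ε) * B ^ 2 ≤ worstCaseError Ψ (spectralBall ψ q B) := by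
  set t := ε / (q d + ε)
  have hκε : 0 < q d + ε := by linarith
  have ht0 : 0 ≤ t := by positivity
  have ht : t ≤ 1 - t := by
    have : t ≤ 1 / 2 := by rw [div_le_iff₀ hκε]; linarith
    linarith
  have hκt : q d * t = ε * (1 - t) := by
    simp only [t]
    field_simp
    ring
  have : FiniteDimensional ℝ (Submodule.span ℝ (ψ '' Set.Iic d)) :=
    FiniteDimensional.span_of_finite ℝ ((Set.finite_Iic d).image ψ)
  have hW : d < Module.finrank ℝ (Submodule.span ℝ (ψ '' Set.Iic d)) := by
    rw [Set.image_eq_range, finrank_span_eq_card (b := fun i : Set.Iic d => ψ i)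
      (hON.linearIndependent.comp _ Subtype.val_injective)]
    simp
  obtain ⟨v, hvW, hv, hΨv⟩ := exists_mem_norm_eq_one_forall_inner_eq_zero hW Ψ
  obtain ⟨f, hfW, hf0, hfB, hfv⟩ := exists_mem_inner_sq_ge
    (Submodule.subset_span (Set.mem_image_of_mem ψ (Set.mem_Iic.mpr d.zero_le))) hvW (hON.1 0) hv
    ht0 ht B
  have hfF : f ∈ spectralBall ψ q B :=
    mem_spectralBall_of_forall_gt_eq_zero hON hq hq0 (hε.le.trans hεq) hκt
      (fun i hi => hON.inner_eq_zero_of_mem_span_image hfW (Set.notMem_Iic.mpr hi)) hf0 hfB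
  calc t * B ^ 2 ≤ ⟪f, v⟫ ^ 2 := hfv
    _ ≤ approxError Ψ f := inner_sq_le_approxError hv hΨv f
    _ ≤ worstCaseError Ψ (spectralBall ψ q B) :=
      approxError_le_worstCaseError
        (fun g hg => approxError_le_of_mem_spectralBall hON hbasis Ψ hg) hfF

theorem worstCaseError_spectralBall_le (hε : 0 ≤ ε) (hκε : 0 < q d + ε)
    (hspan : Submodule.span ℝ (ψ '' Set.Iio d) ≤ Submodule.span ℝ (Set.range Ψ)) :
    worstCaseError Ψ (spectralBall ψ q B) ≤ ε / (q d + ε) * B ^ 2 := by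
  refine worstCaseError_le ⟨0, zero_mem_spectralBall⟩ fun g hg => ?_
  have hproj : ∑ i ∈ Finset.range d, ⟪g, ψ i⟫ • ψ i ∈ Submodule.span ℝ (Set.range Ψ) :=
    hspan (Submodule.sum_smul_mem _ _ fun i hi =>
      Submodule.subset_span ⟨i, Finset.mem_range.mp hi, rfl⟩)
  have htail := mul_tsum_indicator_compl_le (s := ↑(Finset.range d))
    (fun i => sq_nonneg ⟪g, ψ i⟫) (hON.hasSum_inner_sq hbasis g).summable hg.1
    (fun i _ => hq0 ▸ hq i.zero_le) (fun i hi => hq (by simpa using hi)) hε hg.2.1 hg.2.2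
  calc approxError Ψ g ≤ ‖(∑ i ∈ Finset.range d, ⟪g, ψ i⟫ • ψ i) - g‖ ^ 2 :=
        approxError_le_of_mem_span hproj
    _ = ∑' i, (↑(Finset.range d) : Set ℕ)ᶜ.indicator (fun i => ⟪g, ψ i⟫ ^ 2) i :=
        hON.norm_sq_sum_sub_eq_tsum hbasis _ g
    _ ≤ ε / (q d + ε) * B ^ 2 := by
        rw [div_mul_eq_mul_div, le_div_iff₀ hκε]
        linarith

end WorstCaseError

end

theorem worst_case_approximation_error_lower_bound_general
    {H : Type*} [NormedAddCommGroup H] [InnerProductSpace ℝ H] [CompleteSpace H]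
    (ψ : ℕ → H) (lam : ℕ → ℝ) (d : ℕ) (ε B : ℝ) (Ψhat : Fin d → H)
    (hON : Orthonormal ℝ ψ)
    (hbasis : (Submodule.span ℝ (Set.range ψ)).topologicalClosure = ⊤)
    (hlam1 : lam 0 = 1) (hmono : Antitone lam) (hpos : ∀ i, 0 < lam i)
    (hlamd : lam d < 1)
    (hε : 0 < ε ∧ ε < 1)
    (hhalf : (lam d / (1 - lam d)) * (ε / (1 - ε)) ≤ 1 / 2) :
    letI F : Set H := {f : H |
      Summable (fun i => ((1 - ε - lam i) / lam i) * (@inner ℝ _ _ f (ψ i)) ^ 2) ∧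
      (∑' i, (@inner ℝ _ _ f (ψ i)) ^ 2) ≤ B ^ 2 ∧
      (∑' i, ((1 - ε - lam i) / lam i) * (@inner ℝ _ _ f (ψ i)) ^ 2) ≤ 0}
    letI errSup : ℝ := sSup {e : ℝ | ∃ f ∈ F,
      e = sInf {t : ℝ | ∃ w : Fin d → ℝ, t = ‖(∑ i, w i • Ψhat i) - f‖ ^ 2}}
    (lam d / (1 - lam d)) * (ε / (1 - ε)) * B ^ 2 ≤ errSup ∧
      (Submodule.span ℝ (Set.range Ψhat) = Submodule.span ℝ (ψ '' Set.Iio d) →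
        errSup = (lam d / (1 - lam d)) * (ε / (1 - ε)) * B ^ 2) := by
  obtain ⟨hε0, hε1⟩ := hε
  set q : ℕ → ℝ := fun i => (1 - ε - lam i) / lam i
  have hq : Monotone q := fun i j hij => by
    simp only [q]
    rw [div_le_div_iff₀ (hpos i) (hpos j)]
    nlinarith [hmono hij, hpos i, hpos j]
  have hq0 : q 0 = -ε := by simp [q, hlam1]
  have hκε : q d + ε = (1 - ε) * (1 - lam d) / lam d := by
    have := (hpos d).ne'
    simp only [q]
    field_simp
    ring
  have hκε_pos : 0 < q d + ε := by
    rw [hκε]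
    exact div_pos (mul_pos (by linarith) (by linarith)) (hpos d)
  have hratio : lam d / (1 - lam d) * (ε / (1 - ε)) = ε / (q d + ε) := by
    rw [hκε]
    field_simp
  have hεq : ε ≤ q d := by
    rw [hratio, div_le_iff₀ hκε_pos] at hhalf
    linarith
  show _ ≤ worstCaseError Ψhat (spectralBall ψ q B) ∧
    (_ → worstCaseError Ψhat (spectralBall ψ q B) = _)
  rw [hratio]
  have hlow := le_worstCaseError_spectralBall hON hbasis hq hq0 B Ψhat hε0 hεq
  exact ⟨hlow, fun hspan => (worstCaseError_spectralBall_le hON hbasis hq hq0 B Ψhat hε0.le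
    hκε_pos hspan.ge).antisymm hlow⟩

/-- Proposition 4.1, lower bound and sufficiency: for any `d`-dimensional
encoder `Ψ̂`, the worst-case approximation error over
`F_B(Γ;ε) = { f : ∑ u_i² ≤ B², ∑ ((1−ε−λ_i)/λ_i) u_i² ≤ 0 }` (where `u_i = ⟨f, ψ_i⟩` in
the orthonormal eigenbasis `ψ` of `Γ*Γ`, `λ₁ = lam 0 = 1`) is at least
`(λ_{d+1}/(1−λ_{d+1})) (ε/(1−ε)) B²`, provided this quantity is at most `1/2`·(scale);
equality holds when `Ψ̂` spans the top-`d` eigenspace. (0-indexed: `λ_{d+1} = lam d`.) -/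
theorem worst_case_approximation_error_lower_bound
    {H : Type*} [NormedAddCommGroup H] [InnerProductSpace ℝ H] [CompleteSpace H]
    (ψ : ℕ → H) (lam : ℕ → ℝ) (d : ℕ) (ε B : ℝ) (Ψhat : Fin d → H)
    (hON : Orthonormal ℝ ψ)
    (hbasis : (Submodule.span ℝ (Set.range ψ)).topologicalClosure = ⊤)
    (hlam1 : lam 0 = 1) (hmono : Antitone lam) (hpos : ∀ i, 0 < lam i)
    (hlamd : lam d < 1)
    (hε : 0 < ε ∧ ε < 1) (hB : 0 < B)
    (hhalf : (lam d / (1 - lam d)) * (ε / (1 - ε)) ≤ 1 / 2) :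
    letI F : Set H := {f : H |
      Summable (fun i => ((1 - ε - lam i) / lam i) * (@inner ℝ _ _ f (ψ i)) ^ 2) ∧
      (∑' i, (@inner ℝ _ _ f (ψ i)) ^ 2) ≤ B ^ 2 ∧
      (∑' i, ((1 - ε - lam i) / lam i) * (@inner ℝ _ _ f (ψ i)) ^ 2) ≤ 0}
    letI errSup : ℝ := sSup {e : ℝ | ∃ f ∈ F,
      e = sInf {t : ℝ | ∃ w : Fin d → ℝ, t = ‖(∑ i, w i • Ψhat i) - f‖ ^ 2}}
    (lam d / (1 - lam d)) * (ε / (1 - ε)) * B ^ 2 ≤ errSup ∧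
      (Submodule.span ℝ (Set.range Ψhat) = Submodule.span ℝ (ψ '' Set.Iio d) →
        errSup = (lam d / (1 - lam d)) * (ε / (1 - ε)) * B ^ 2) :=
  worst_case_approximation_error_lower_bound_general ψ lam d ε B Ψhat hON hbasis hlam1 hmono hpos
    hlamd hε hhalf
end

section
/- Sufficiency direction of encoder optimality: if Ψ̂ spans the top-d eigenspace span{ψ₁,…,ψ_d}, then for every f = ∑_i u_i ψ_i ∈ F_B(Γ;ε), the residual a := ∑_{i ≥ d+1} u_i² satisfies a ≤ (λ_{d+1}/(1−λ_{d+1})) · (ε/(1−ε)) · B². -/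
/-!
Split `∑ u_i²` into the head `b = ∑_{i<d} u_i²` and the tail `a = ∑_{i≥d} u_i²`. The weight
`(1 - ε - λ) / λ` is antitone in `λ` and at least `-ε` for `λ ≤ 1`, so the constraint gives
`((1 - ε - λ_d) / λ_d) a - ε b ≤ 0`; together with `a + b ≤ B²` this yields
`((1 - ε)(1 - λ_d) / λ_d) a ≤ ε B²`.
-/

lemma one_sub_sub_div_antitoneOn {ε : ℝ} (hε : ε ≤ 1) :
    AntitoneOn (fun x : ℝ => (1 - ε - x) / x) (Set.Ioi 0) := by
  intro x hx y hy hxy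
  rw [div_le_div_iff₀ hy hx]
  nlinarith

lemma neg_le_one_sub_sub_div {ε x : ℝ} (hε : ε ≤ 1) (hx : 0 < x) (hx1 : x ≤ 1) :
    -ε ≤ (1 - ε - x) / x := by
  rw [le_div_iff₀ hx]
  nlinarith

lemma mul_tsum_add_mul_tsum_compl_le {ι : Type*} {s : Set ι} {f c : ι → ℝ} {K m : ℝ}
    (hf0 : ∀ i, 0 ≤ f i) (hf : Summable f) (hcf : Summable fun i => c i * f i)
    (hs : ∀ i ∈ s, K ≤ c i) (hsc : ∀ i ∉ s, m ≤ c i) :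
    K * ∑' i : s, f i + m * ∑' i : ↑sᶜ, f i ≤ ∑' i, c i * f i := by
  rw [← (hcf.subtype s).tsum_add_tsum_compl (hcf.subtype sᶜ), ← tsum_mul_left, ← tsum_mul_left]
  exact add_le_add
    (((hf.subtype s).mul_left K).tsum_le_tsum
      (fun i => mul_le_mul_of_nonneg_right (hs i i.2) (hf0 i)) (hcf.subtype s))
    (((hf.subtype sᶜ).mul_left m).tsum_le_tsum
      (fun i => mul_le_mul_of_nonneg_right (hsc i i.2) (hf0 i)) (hcf.subtype sᶜ))

lemma le_of_add_le_of_weighted_nonpos {lam ε a b C : ℝ} (hlam : 0 < lam) (hlam1 : lam < 1)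
    (hε0 : 0 ≤ ε) (hε1 : ε < 1) (hab : a + b ≤ C)
    (hw : (1 - ε - lam) / lam * a + -ε * b ≤ 0) :
    a ≤ lam / (1 - lam) * (ε / (1 - ε)) * C := by
  have hw' : (1 - ε - lam) * a ≤ ε * lam * b := by
    have h := mul_le_mul_of_nonneg_right hw hlam.le
    have hcancel : (1 - ε - lam) / lam * a * lam = (1 - ε - lam) * a := by field_simp
    linarith
  have hb : ε * lam * b ≤ ε * lam * (C - a) :=
    mul_le_mul_of_nonneg_left (by linarith) (by positivity)
  have hkey : a * ((1 - lam) * (1 - ε)) ≤ lam * ε * C := by linear_combination hw' + hb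
  rwa [div_mul_div_comm, div_mul_eq_mul_div, le_div_iff₀ (by nlinarith)]

theorem top_d_eigenspace_residual_bound_general
    (d : ℕ) (lam u : ℕ → ℝ) (ε B : ℝ)
    (hlam1 : lam 0 = 1) (hmono : Antitone lam) (hpos : ∀ i, 0 < lam i)
    (hlamd : lam d < 1)
    (hε : 0 < ε ∧ ε < 1)
    (hu2 : Summable (fun i => u i ^ 2))
    (hcs : Summable (fun i => ((1 - ε - lam i) / lam i) * u i ^ 2))
    (hnorm : (∑' i, u i ^ 2) ≤ B ^ 2)
    (hconstraint : (∑' i, ((1 - ε - lam i) / lam i) * u i ^ 2) ≤ 0) :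
    (∑' i, if d ≤ i then u i ^ 2 else 0)
      ≤ (lam d / (1 - lam d)) * (ε / (1 - ε)) * B ^ 2 := by
  obtain ⟨hε0, hε1⟩ := hε
  have hweighted := mul_tsum_add_mul_tsum_compl_le (s := Set.Ici d)
    (K := (1 - ε - lam d) / lam d) (m := -ε) (fun i => sq_nonneg (u i)) hu2 hcs
    (fun i hi => one_sub_sub_div_antitoneOn hε1.le (hpos i) (hpos d) (hmono hi))
    (fun i _ => neg_le_one_sub_sub_div hε1.le (hpos i) (hlam1 ▸ hmono (Nat.zero_le i)))
  have htail : (∑' i, if d ≤ i then u i ^ 2 else 0) = ∑' i : Set.Ici d, u i ^ 2 := by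
    rw [tsum_subtype (Set.Ici d) fun i => u i ^ 2]
    simp only [Set.indicator_apply, Set.mem_Ici]
  rw [htail]
  exact le_of_add_le_of_weighted_nonpos (hpos d) hlamd hε0.le hε1
    (((hu2.subtype _).tsum_add_tsum_compl (hu2.subtype _)).trans_le hnorm)
    (hweighted.trans hconstraint)

/-- sufficiency direction of encoder optimality: if `f = ∑ u_i ψ_i`
belongs to `F_B(Γ;ε)` (i.e. `∑ u_i² ≤ B²` and `∑ ((1−ε−λ_i)/λ_i) u_i² ≤ 0`), then the
residual beyond the top-`d` eigenspace, `a = ∑_{i ≥ d+1} u_i²` (0-indexed: `i ≥ d`),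
satisfies `a ≤ (λ_{d+1}/(1−λ_{d+1})) (ε/(1−ε)) B²`.  Eigenvalues are 1-indexed in the
paper; here `lam 0 = λ₁ = 1` and `lam d = λ_{d+1}`. -/
theorem top_d_eigenspace_residual_bound
    (d : ℕ) (lam u : ℕ → ℝ) (ε B : ℝ)
    (hlam1 : lam 0 = 1) (hmono : Antitone lam) (hpos : ∀ i, 0 < lam i)
    (hlamd : lam d < 1)
    (hε : 0 < ε ∧ ε < 1) (hB : 0 < B)
    (hu2 : Summable (fun i => u i ^ 2))
    (hcs : Summable (fun i => ((1 - ε - lam i) / lam i) * u i ^ 2))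
    (hnorm : (∑' i, u i ^ 2) ≤ B ^ 2)
    (hconstraint : (∑' i, ((1 - ε - lam i) / lam i) * u i ^ 2) ≤ 0) :
    (∑' i, if d ≤ i then u i ^ 2 else 0)
      ≤ (lam d / (1 - lam d)) * (ε / (1 - ε)) * B ^ 2 :=
  top_d_eigenspace_residual_bound_general d lam u ε B hlam1 hmono hpos hlamd hε hu2 hcs hnorm
    hconstraint
end

section
/- Let P be a d×∞ real matrix with linearly independent rows representing G := P P^T positive definite, and let D be a d×d diagonal matrix with positive entries d_i ≥ d_min > 0 representing diag(λ̄_1,…,λ̄_d) with λ̄_d = d_min. Then the operator norm satisfies ‖P^T D^{-1} (P P^T)^{-1} P‖₂ ≤ d_min^{-1} · √(λ_max(G)/λ_min(G)). -/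
/-!
View the rows `p i` of `P` as vectors of `ℓ²`, so that `G` is their Gram matrix and
`Pᵀ c = ∑ c i • p i` has `‖Pᵀ c‖² = cᵀ G c`. For `y = G⁻¹ P v` the vector `Pᵀ y` is the orthogonal
projection of `v` onto the span of the rows, hence `λ_min(G) ‖y‖² ≤ yᵀ G y = ‖Pᵀ y‖² ≤ ‖v‖²`.
With `c = D⁻¹ y` we get `‖Pᵀ c‖² = cᵀ G c ≤ λ_max(G) ‖c‖² ≤ λ_max(G) d_min⁻² ‖y‖²`, and the two
bounds combine.
-/
open Matrix
open scoped InnerProductSpace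

namespace Matrix

variable {n : Type*} [Fintype n]

lemma dotProduct_conj_mulVec (U B : Matrix n n ℝ) (x : n → ℝ) :
    x ⬝ᵥ (U * B * star U) *ᵥ x = (star U *ᵥ x) ⬝ᵥ B *ᵥ (star U *ᵥ x) := by
  rw [← mulVec_mulVec, ← mulVec_mulVec, dotProduct_mulVec, star_eq_conjTranspose,
    conjTranspose_eq_transpose_of_trivial, mulVec_transpose]

lemma dotProduct_self_inv_mul_le {D : n → ℝ} {dmin : ℝ} (hdmin : 0 < dmin) (hD : ∀ i, dmin ≤ D i)
    (y : n → ℝ) :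
    (fun i => (D i)⁻¹ * y i) ⬝ᵥ (fun i => (D i)⁻¹ * y i) ≤ dmin⁻¹ ^ 2 * (y ⬝ᵥ y) := by
  simp only [dotProduct, Finset.mul_sum]
  refine Finset.sum_le_sum fun i _ => ?_
  have hDi : (D i)⁻¹ ^ 2 ≤ dmin⁻¹ ^ 2 :=
    pow_le_pow_left₀ (inv_nonneg.mpr (hdmin.trans_le (hD i)).le) (inv_anti₀ hdmin (hD i)) 2
  nlinarith [mul_self_nonneg (y i)]

variable [DecidableEq n] {A : Matrix n n ℝ}

lemma IsHermitian.dotProduct_mulVec_eq_sum_eigenvalues (hA : A.IsHermitian) (x : n → ℝ) :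
    x ⬝ᵥ A *ᵥ x =
      ∑ i, hA.eigenvalues i * (star (hA.eigenvectorUnitary : Matrix n n ℝ) *ᵥ x) i ^ 2 := by
  conv_lhs => rw [hA.spectral_theorem, Unitary.conjStarAlgAut_apply, dotProduct_conj_mulVec]
  simp only [dotProduct, mulVec_diagonal, Function.comp_apply, RCLike.ofReal_real_eq_id, id]
  exact Finset.sum_congr rfl fun i _ => by ring

lemma IsHermitian.dotProduct_self_eq_sum (hA : A.IsHermitian) (x : n → ℝ) :
    x ⬝ᵥ x = ∑ i, (star (hA.eigenvectorUnitary : Matrix n n ℝ) *ᵥ x) i ^ 2 := by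
  set U : Matrix n n ℝ := ↑hA.eigenvectorUnitary
  have hU : U * 1 * star U = 1 := by
    rw [mul_one]; exact Unitary.mul_star_self_of_mem hA.eigenvectorUnitary.2
  calc x ⬝ᵥ x = x ⬝ᵥ (U * 1 * star U) *ᵥ x := by rw [hU, one_mulVec]
    _ = ∑ i, (star U *ᵥ x) i ^ 2 := by
      rw [dotProduct_conj_mulVec, one_mulVec]; simp only [dotProduct, sq]

lemma IsHermitian.iInf_eigenvalues_mul_dotProduct_le (hA : A.IsHermitian) (x : n → ℝ) :
    (⨅ i, hA.eigenvalues i) * (x ⬝ᵥ x) ≤ x ⬝ᵥ A *ᵥ x := by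
  rw [hA.dotProduct_mulVec_eq_sum_eigenvalues, hA.dotProduct_self_eq_sum, Finset.mul_sum]
  exact Finset.sum_le_sum fun i _ =>
    mul_le_mul_of_nonneg_right (ciInf_le (Set.finite_range _).bddBelow i) (sq_nonneg _)

lemma IsHermitian.dotProduct_mulVec_le_iSup_eigenvalues_mul (hA : A.IsHermitian) (x : n → ℝ) :
    x ⬝ᵥ A *ᵥ x ≤ (⨆ i, hA.eigenvalues i) * (x ⬝ᵥ x) := by
  rw [hA.dotProduct_mulVec_eq_sum_eigenvalues, hA.dotProduct_self_eq_sum, Finset.mul_sum]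
  exact Finset.sum_le_sum fun i _ =>
    mul_le_mul_of_nonneg_right (le_ciSup (Set.finite_range _).bddAbove i) (sq_nonneg _)

lemma PosDef.iInf_eigenvalues_pos [Nonempty n] (hA : A.PosDef) : 0 < ⨅ i, hA.1.eigenvalues i := by
  obtain ⟨i, hi⟩ := exists_eq_ciInf_of_finite (f := hA.1.eigenvalues)
  exact hi ▸ hA.eigenvalues_pos i

section Gram

variable {E ι : Type*} [NormedAddCommGroup E] [InnerProductSpace ℝ E] [Fintype ι]

lemma norm_sum_smul_sq_eq_dotProduct_gram (p : ι → E) (c : ι → ℝ) :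
    ‖∑ i, c i • p i‖ ^ 2 = c ⬝ᵥ gram ℝ p *ᵥ c := by
  rw [← real_inner_self_eq_norm_sq, ← star_trivial c, star_dotProduct_gram_mulVec, star_trivial]

lemma inner_sum_smul_eq_dotProduct (p : ι → E) (c : ι → ℝ) (v : E) :
    ⟪∑ i, c i • p i, v⟫_ℝ = c ⬝ᵥ fun j => ⟪p j, v⟫_ℝ := by
  simp only [sum_inner, inner_smul_left, dotProduct, RCLike.conj_to_real]

lemma norm_sum_gram_inv_mulVec_smul_le [DecidableEq ι] (p : ι → E) (hp : IsUnit (gram ℝ p).det)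
    (v : E) : ‖∑ i, ((gram ℝ p)⁻¹ *ᵥ fun j => ⟪p j, v⟫_ℝ) i • p i‖ ≤ ‖v‖ := by
  set w : ι → ℝ := fun j => ⟪p j, v⟫_ℝ
  set u := ∑ i, ((gram ℝ p)⁻¹ *ᵥ w) i • p i
  have hu : ‖u‖ ^ 2 = ⟪u, v⟫_ℝ := by
    rw [norm_sum_smul_sq_eq_dotProduct_gram, inner_sum_smul_eq_dotProduct, mulVec_mulVec,
      mul_nonsing_inv _ hp, one_mulVec]
  have hcs : ‖u‖ * ‖u‖ ≤ ‖u‖ * ‖v‖ := by rw [← sq, hu]; exact real_inner_le_norm u v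
  nlinarith [norm_nonneg u, norm_nonneg v]

theorem norm_sq_sum_inv_mul_gram_inv_mulVec_smul_le [Nonempty ι] [DecidableEq ι] (p : ι → E)
    (hG : (gram ℝ p).PosDef) (D : ι → ℝ) {dmin : ℝ} (hdmin : 0 < dmin) (hD : ∀ i, dmin ≤ D i)
    (v : E) :
    ‖∑ i, ((D i)⁻¹ * ((gram ℝ p)⁻¹ *ᵥ fun j => ⟪p j, v⟫_ℝ) i) • p i‖ ^ 2 ≤
      dmin⁻¹ ^ 2 * ((⨆ i, hG.1.eigenvalues i) / ⨅ i, hG.1.eigenvalues i) * ‖v‖ ^ 2 := by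
  set y := (gram ℝ p)⁻¹ *ᵥ fun j => ⟪p j, v⟫_ℝ
  set lmax := ⨆ i, hG.1.eigenvalues i
  set lmin := ⨅ i, hG.1.eigenvalues i
  have hlmin : 0 < lmin := hG.iInf_eigenvalues_pos
  have hlmax : 0 ≤ lmax := hlmin.le.trans (ciInf_le_ciSup (Set.finite_range _).bddBelow
    (Set.finite_range _).bddAbove)
  have hy : lmin * (y ⬝ᵥ y) ≤ ‖v‖ ^ 2 := calc
    lmin * (y ⬝ᵥ y) ≤ y ⬝ᵥ gram ℝ p *ᵥ y := hG.1.iInf_eigenvalues_mul_dotProduct_le y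
    _ = ‖∑ i, y i • p i‖ ^ 2 := (norm_sum_smul_sq_eq_dotProduct_gram p y).symm
    _ ≤ ‖v‖ ^ 2 := by
      gcongr; exact norm_sum_gram_inv_mulVec_smul_le p hG.det_pos.ne'.isUnit v
  calc ‖∑ i, ((D i)⁻¹ * y i) • p i‖ ^ 2
      = (fun i => (D i)⁻¹ * y i) ⬝ᵥ gram ℝ p *ᵥ (fun i => (D i)⁻¹ * y i) :=
        norm_sum_smul_sq_eq_dotProduct_gram p _
    _ ≤ lmax * ((fun i => (D i)⁻¹ * y i) ⬝ᵥ (fun i => (D i)⁻¹ * y i)) :=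
        hG.1.dotProduct_mulVec_le_iSup_eigenvalues_mul _
    _ ≤ lmax * (dmin⁻¹ ^ 2 * (y ⬝ᵥ y)) := by gcongr; exact dotProduct_self_inv_mul_le hdmin hD y
    _ ≤ lmax * (dmin⁻¹ ^ 2 * (‖v‖ ^ 2 / lmin)) := by
        gcongr; rw [le_div_iff₀ hlmin, mul_comm]; exact hy
    _ = dmin⁻¹ ^ 2 * (lmax / lmin) * ‖v‖ ^ 2 := by ring

end Gram

end Matrix

lemma memℓp_two_of_summable_sq {α : Type*} {f : α → ℝ} (hf : Summable fun n => f n ^ 2) :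
    Memℓp f 2 :=
  memℓp_gen (by simpa [Real.norm_eq_abs] using hf)

namespace lp

variable {α : Type*}

lemma real_inner_eq_tsum (f g : lp (fun _ : α => ℝ) 2) : ⟪f, g⟫_ℝ = ∑' n, f n * g n := by
  simp [lp.inner_eq_tsum, mul_comm]

lemma norm_sq_eq_tsum_sq (f : lp (fun _ : α => ℝ) 2) : ‖f‖ ^ 2 = ∑' n, f n ^ 2 := by
  rw [← real_inner_self_eq_norm_sq, real_inner_eq_tsum]; simp only [sq]

end lp

theorem operator_norm_bound_whitened_projection_general
    (d : ℕ) (hd : 0 < d) (P : Fin d → ℕ → ℝ) (D : Fin d → ℝ) (dmin : ℝ)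
    (hdmin : 0 < dmin) (hD : ∀ i, dmin ≤ D i)
    (hrows : ∀ i, Summable (fun n => (P i n) ^ 2))
    (G : Matrix (Fin d) (Fin d) ℝ)
    (hG : G = fun i j => ∑' n, P i n * P j n)
    (hGpd : G.PosDef) (hHerm : G.IsHermitian)
    (v : ℕ → ℝ) (hv : Summable (fun n => (v n) ^ 2))
    (Mv : ℕ → ℝ)
    (hMv : Mv = fun n => ∑ i : Fin d, ∑ j : Fin d,
        P i n * (D i)⁻¹ * (G⁻¹ i j) * (∑' m, P j m * v m)) :
    (∑' n, (Mv n) ^ 2)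
      ≤ (dmin⁻¹) ^ 2 * ((⨆ i, hHerm.eigenvalues i) / (⨅ i, hHerm.eigenvalues i)) *
          ∑' n, (v n) ^ 2 := by
  have : Nonempty (Fin d) := ⟨⟨0, hd⟩⟩
  let p : Fin d → lp (fun _ : ℕ => ℝ) 2 := fun i => ⟨P i, memℓp_two_of_summable_sq (hrows i)⟩
  let u : lp (fun _ : ℕ => ℝ) 2 := ⟨v, memℓp_two_of_summable_sq hv⟩
  have hw : (fun j => ⟪p j, u⟫_ℝ) = fun j => ∑' m, P j m * v m :=
    funext fun j => lp.real_inner_eq_tsum (p j) u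
  obtain rfl : G = gram ℝ p := by
    rw [hG]; ext i j; exact (lp.real_inner_eq_tsum (p i) (p j)).symm
  have hMv_coe :
      Mv = ⇑(∑ i, ((D i)⁻¹ * ((gram ℝ p)⁻¹ *ᵥ fun j => ⟪p j, u⟫_ℝ) i) • p i) := by
    rw [hMv, lp.coeFn_sum, hw]
    funext n
    simp only [Finset.sum_apply, lp.coeFn_smul, Pi.smul_apply, smul_eq_mul, Matrix.mulVec,
      dotProduct, Finset.mul_sum, Finset.sum_mul]
    exact Finset.sum_congr rfl fun i _ => Finset.sum_congr rfl fun j _ => by ring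
  rw [hMv_coe, ← lp.norm_sq_eq_tsum_sq, show ∑' n, v n ^ 2 = ‖u‖ ^ 2 from
    (lp.norm_sq_eq_tsum_sq u).symm]
  exact norm_sq_sum_inv_mul_gram_inv_mulVec_smul_le p hGpd D hdmin hD u

/-- operator-norm bound for `Pᵀ D⁻¹ (P Pᵀ)⁻¹ P`.  Here `P : ℝ^d → ℓ²`
has rows `P i ∈ ℓ²`, `G = P Pᵀ` is positive definite, `D = diag(d₁,…,d_d)` with
`d_i ≥ d_min > 0`.  Then `‖Pᵀ D⁻¹ G⁻¹ P‖₂ ≤ d_min⁻¹ √(λ_max(G)/λ_min(G))`, stated in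
squared form on the quadratic action: `∑ₙ ((Mv)ₙ)² ≤ d_min⁻² (λ_max/λ_min) ∑ₙ vₙ²`. -/
theorem operator_norm_bound_whitened_projection
    (d : ℕ) (hd : 0 < d) (P : Fin d → ℕ → ℝ) (D : Fin d → ℝ) (dmin : ℝ)
    (hdmin : 0 < dmin) (hD : ∀ i, dmin ≤ D i)
    (hrows : ∀ i, Summable (fun n => (P i n) ^ 2))
    (hprods : ∀ i j, Summable (fun n => P i n * P j n))
    (G : Matrix (Fin d) (Fin d) ℝ)
    (hG : G = fun i j => ∑' n, P i n * P j n)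
    (hGpd : G.PosDef) (hHerm : G.IsHermitian)
    (v : ℕ → ℝ) (hv : Summable (fun n => (v n) ^ 2))
    (hPv : ∀ j, Summable (fun m => P j m * v m))
    (Mv : ℕ → ℝ)
    (hMv : Mv = fun n => ∑ i : Fin d, ∑ j : Fin d,
        P i n * (D i)⁻¹ * (G⁻¹ i j) * (∑' m, P j m * v m)) :
    (∑' n, (Mv n) ^ 2)
      ≤ (dmin⁻¹) ^ 2 * ((⨆ i, hHerm.eigenvalues i) / (⨅ i, hHerm.eigenvalues i)) *
          ∑' n, (v n) ^ 2 :=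
  operator_norm_bound_whitened_projection_general d hd P D dmin hdmin hD hrows G hG hGpd hHerm v hv
    Mv hMv
end
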